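/- The conditional Malliavin estimate of the delta of the Asian call option is given by the following Gaussian integral identity: ∫_{ψ}^{∞} (2·e^{−rT}/(S_0·σ²)) · ( (S_d(x) − S_0)/(T·S_A(x)) − ω₀ ) · (S_A(x) − K) · φ(x) dx = −(2·e^{−rT}/(T·σ²))·Φ(−ψ) + ( 2·e^{−rT}·S̃_d·e^{r·t₁}/(T·S_0·σ²) − 2·e^{−rT}·ω₀·S̃_A·e^{r·t₁}/(S_0·σ²) )·Φ(σ·√t₁ − ψ) − K·[ ( 2·e^{−rT}·S̃_d/(T·S_0·S̃_A·σ²) − 2·e^{−rT}·ω₀/(S_0·σ²) )·Φ(−ψ) − ( 2·e^{−rT − r·t₁ + σ²·t₁}/(T·S̃_A·σ²) )·Φ(−σ·√t₁ − ψ) ]. -/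
import Mathlib
open MeasureTheory Set

noncomputable def gpdf (x : ℝ) : ℝ := (Real.sqrt (2 * Real.pi))⁻¹ * Real.exp (-x ^ 2 / 2)

lemma gpdf_shift (α x : ℝ) :
    Real.exp (α * x) * gpdf x = (Real.exp (α ^ 2 / 2) * (Real.sqrt (2 * Real.pi))⁻¹)
      * Real.exp (-(1/2) * (x - α) ^ 2) := by
  unfold gpdf
  calc Real.exp (α * x) * ((Real.sqrt (2 * Real.pi))⁻¹ * Real.exp (-x ^ 2 / 2))
      = (Real.sqrt (2 * Real.pi))⁻¹ * (Real.exp (α * x) * Real.exp (-x ^ 2 / 2)) := by ring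
    _ = (Real.sqrt (2 * Real.pi))⁻¹ * (Real.exp (α ^ 2 / 2) * Real.exp (-(1/2) * (x - α) ^ 2)) := by
        rw [← Real.exp_add, ← Real.exp_add]; congr 1; ring
    _ = (Real.exp (α ^ 2 / 2) * (Real.sqrt (2 * Real.pi))⁻¹) * Real.exp (-(1/2) * (x - α) ^ 2) := by ring

lemma gpdf_integrable (α : ℝ) : Integrable (fun x => Real.exp (α * x) * gpdf x) := by
  have h := (integrable_exp_neg_mul_sq (by norm_num : (0:ℝ) < 1/2)).comp_sub_right α
  have h2 := h.const_mul (Real.exp (α ^ 2 / 2) * (Real.sqrt (2 * Real.pi))⁻¹)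
  refine h2.congr (Filter.Eventually.of_forall fun x => ?_)
  exact (gpdf_shift α x).symm

lemma gauss_int (α c : ℝ) :
    ∫ x in Set.Ioi c, Real.exp (α * x) * gpdf x
      = Real.exp (α ^ 2 / 2) * ∫ u in Set.Iic (α - c), gpdf u := by
  have heven : ∀ u : ℝ, gpdf (-u) = gpdf u := by
    intro u; unfold gpdf; rw [neg_pow]; ring_nf
  have step1 : (∫ u in Set.Iic (α - c), gpdf u) = ∫ u in Set.Ioi (c - α), gpdf u := by
    rw [show (∫ u in Set.Iic (α - c), gpdf u) = ∫ u in Set.Iic (α - c), gpdf (-u) by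
      simp_rw [heven]]
    rw [integral_comp_neg_Iic]
    norm_num
  have step2 : (∫ u in Set.Ioi (c - α), gpdf u) = ∫ x in Set.Ioi c, gpdf (x - α) := by
    rw [← integral_indicator measurableSet_Ioi, ← integral_indicator measurableSet_Ioi]
    rw [← integral_sub_right_eq_self (fun x => (Set.Ioi (c - α)).indicator gpdf x) α]
    congr 1
    funext x
    by_cases hx : x ∈ Set.Ioi c
    · rw [Set.indicator_of_mem hx, Set.indicator_of_mem]
      simpa using hx
    · rw [Set.indicator_of_notMem hx, Set.indicator_of_notMem]
      simpa using hx
  rw [step1, step2, ← integral_const_mul]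
  congr 1
  funext x
  have h := gpdf_shift α x
  have h2 : Real.exp (α ^ 2 / 2) * gpdf (x - α)
      = (Real.exp (α ^ 2 / 2) * (Real.sqrt (2 * Real.pi))⁻¹) * Real.exp (-(1/2) * (x - α) ^ 2) := by
    unfold gpdf
    rw [show -(x - α) ^ 2 / 2 = -(1/2) * (x - α) ^ 2 by ring]
    ring
  rw [h, h2]

theorem stmt_17
    (T S0 σ r : ℝ) (hT : 0 < T) (hS0 : 0 < S0) (hσ : 0 < σ) (hr : 0 < r)
    (d : ℕ) (hd : 2 ≤ d)
    (A : Fin d → Fin (d - 1) → ℝ) (hA0 : A ⟨0, by omega⟩ = 0)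
    (z : Fin (d - 1) → ℝ)
    (ω₀ : ℝ) (hω₀ : ω₀ = r - σ ^ 2 / 2)
    (t1 : ℝ) (ht1 : t1 = T / d)
    (Stil : Fin d → ℝ)
    (hStil : ∀ j : Fin d,
      Stil j = S0 * Real.exp (ω₀ * ((j : ℝ) * T / d) + σ * ∑ k, A j k * z k))
    (StilA : ℝ) (hStilA : StilA = (1 / (d : ℝ)) * ∑ j, Stil j)
    (Stild : ℝ) (hStild : Stild = Stil ⟨d - 1, by omega⟩)
    (SA Sd : ℝ → ℝ)
    (hSA : ∀ x, SA x = Real.exp (ω₀ * t1 + σ * Real.sqrt t1 * x) * StilA)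
    (hSd : ∀ x, Sd x = Real.exp (ω₀ * t1 + σ * Real.sqrt t1 * x) * Stild)
    (φ : ℝ → ℝ) (hφ : ∀ x, φ x = (Real.sqrt (2 * Real.pi))⁻¹ * Real.exp (-x ^ 2 / 2))
    (K : ℝ) (hK : 0 < K)
    (ψ : ℝ) (hψ : ψ = (Real.log K - Real.log StilA - ω₀ * t1) / (σ * Real.sqrt t1))
    (Φ : ℝ → ℝ) (hΦ : ∀ x, Φ x = ∫ u in Set.Iic x, φ u) :
    (∫ x in Set.Ioi ψ,
        (2 * Real.exp (-r * T) / (S0 * σ ^ 2)) * ((Sd x - S0) / (T * SA x) - ω₀)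
          * (SA x - K) * φ x)
      = -(2 * Real.exp (-r * T) / (T * σ ^ 2)) * Φ (-ψ)
        + (2 * Real.exp (-r * T) * Stild * Real.exp (r * t1) / (T * S0 * σ ^ 2)
            - 2 * Real.exp (-r * T) * ω₀ * StilA * Real.exp (r * t1) / (S0 * σ ^ 2))
            * Φ (σ * Real.sqrt t1 - ψ)
        - K * ((2 * Real.exp (-r * T) * Stild / (T * S0 * StilA * σ ^ 2)
              - 2 * Real.exp (-r * T) * ω₀ / (S0 * σ ^ 2)) * Φ (-ψ)
            - (2 * Real.exp (-r * T - r * t1 + σ ^ 2 * t1) / (T * StilA * σ ^ 2))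
                * Φ (-(σ * Real.sqrt t1) - ψ)) := by
  have hd0 : (0:ℝ) < d := by
    have : 0 < d := by omega
    exact_mod_cast this
  have ht1p : 0 < t1 := by rw [ht1]; exact div_pos hT hd0
  have hsqt : 0 < Real.sqrt t1 := Real.sqrt_pos.mpr ht1p
  set s := σ * Real.sqrt t1 with hs_def
  have hs : 0 < s := mul_pos hσ hsqt
  have hs2 : s ^ 2 = σ ^ 2 * t1 := by rw [hs_def, mul_pow, Real.sq_sqrt ht1p.le]
  have hStilpos : ∀ j, 0 < Stil j := fun j => by rw [hStil]; positivity
  haveI : NeZero d := ⟨by omega⟩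
  have hSum : 0 < ∑ j, Stil j := Finset.sum_pos (fun j _ => hStilpos j) Finset.univ_nonempty
  have hStilApos : 0 < StilA := by
    rw [hStilA]
    positivity
  have hφg : φ = gpdf := funext fun x => by rw [hφ]; rfl
  have hΦg : ∀ y, (∫ u in Set.Iic y, gpdf u) = Φ y := fun y => by rw [hΦ, hφg]
  set A1 := 2 * Real.exp (-r*T) / (S0 * σ^2) * (Stild / T - ω₀ * StilA) * Real.exp (ω₀ * t1) with hA1
  set A2 := 2 * Real.exp (-r*T) / (S0 * σ^2) * (ω₀ * K - S0 / T - K * Stild / (T * StilA)) with hA2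
  set A3 := 2 * Real.exp (-r*T) / (S0 * σ^2) * (K * S0 / (T * StilA)) * (Real.exp (ω₀ * t1))⁻¹ with hA3
  have hpt : ∀ x : ℝ,
      (2 * Real.exp (-r * T) / (S0 * σ ^ 2)) * ((Sd x - S0) / (T * SA x) - ω₀)
          * (SA x - K) * φ x
        = A1 * (Real.exp (s * x) * gpdf x)
          + (A2 * (Real.exp (0 * x) * gpdf x) + A3 * (Real.exp (-s * x) * gpdf x)) := by
    intro x
    rw [hSA, hSd, hφg, hA1, hA2, hA3]
    have hneg : Real.exp (-s * x) = (Real.exp (s * x))⁻¹ := by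
      rw [← Real.exp_neg]; congr 1; ring
    rw [Real.exp_add, zero_mul, Real.exp_zero, hneg]
    have hE := Real.exp_ne_zero (ω₀ * t1)
    have hEx := Real.exp_ne_zero (s * x)
    field_simp
    ring
  have i1 : IntegrableOn (fun x => A1 * (Real.exp (s * x) * gpdf x)) (Set.Ioi ψ) :=
    ((gpdf_integrable s).const_mul A1).integrableOn
  have i2 : IntegrableOn (fun x => A2 * (Real.exp (0 * x) * gpdf x)) (Set.Ioi ψ) :=
    ((gpdf_integrable 0).const_mul A2).integrableOn
  have i3 : IntegrableOn (fun x => A3 * (Real.exp (-s * x) * gpdf x)) (Set.Ioi ψ) :=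
    ((gpdf_integrable (-s)).const_mul A3).integrableOn
  have i23 : IntegrableOn (fun x => A2 * (Real.exp (0 * x) * gpdf x)
      + A3 * (Real.exp (-s * x) * gpdf x)) (Set.Ioi ψ) := i2.add i3
  calc (∫ x in Set.Ioi ψ,
        (2 * Real.exp (-r * T) / (S0 * σ ^ 2)) * ((Sd x - S0) / (T * SA x) - ω₀)
          * (SA x - K) * φ x)
      = ∫ x in Set.Ioi ψ,
          (A1 * (Real.exp (s * x) * gpdf x)
            + (A2 * (Real.exp (0 * x) * gpdf x) + A3 * (Real.exp (-s * x) * gpdf x))) := by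
        simp only [hpt]
    _ = A1 * (∫ x in Set.Ioi ψ, Real.exp (s * x) * gpdf x)
          + (A2 * (∫ x in Set.Ioi ψ, Real.exp (0 * x) * gpdf x)
            + A3 * (∫ x in Set.Ioi ψ, Real.exp (-s * x) * gpdf x)) := by
        rw [integral_add i1 i23, integral_add i2 i3,
          integral_const_mul, integral_const_mul, integral_const_mul]
    _ = A1 * (Real.exp (s ^ 2 / 2) * Φ (s - ψ))
          + (A2 * (Real.exp (0 ^ 2 / 2) * Φ (0 - ψ))
            + A3 * (Real.exp ((-s) ^ 2 / 2) * Φ (-s - ψ))) := by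
        rw [gauss_int s ψ, gauss_int 0 ψ, gauss_int (-s) ψ, hΦg, hΦg, hΦg]
    _ = _ := by
        have e1 : Real.exp (r * t1) = Real.exp (ω₀ * t1) * Real.exp (σ ^ 2 * t1 / 2) := by
          rw [← Real.exp_add]; congr 1; rw [hω₀]; ring
        have e2 : Real.exp (-r * T - r * t1 + σ ^ 2 * t1)
            = Real.exp (-r * T) * ((Real.exp (ω₀ * t1))⁻¹ * Real.exp (σ ^ 2 * t1 / 2)) := by
          rw [← Real.exp_neg, ← Real.exp_add, ← Real.exp_add]; congr 1; rw [hω₀]; ring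
        rw [hA1, hA2, hA3, neg_sq, hs2, e1, e2, zero_sub]
        norm_num
        have hE := Real.exp_ne_zero (ω₀ * t1)
        field_simp
        ring
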